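/- Let m ≥ 2 and let M ⊆ 𝔽₂ᵐ \ {0} be any set of nonzero markers with #M ≤ 2^m − 2. Then there exist a nonzero y ∈ 𝔽₂ᵐ with y ∉ M and two linear (hence fully balanced) maps f₁, f₂ : 𝔽₂ᵐ → 𝔽₂ᵐ such that f₁ has rank m (image dimension m), f₂ has image equal to the hyperplane {x ∈ 𝔽₂ᵐ : y·x = 0} (image dimension m − 1), and every y' ∈ M balances both f₁ and f₂. In particular, no sequence of 2^m − 2 GPK markers can distinguish image dimension m − 1 from image dimension m with certainty. -/
import Mathlib

/-- The dot product of two vectors in `𝔽₂ᵏ`. -/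
def dotp {k : ℕ} (u v : Fin k → ZMod 2) : ZMod 2 := ∑ i, u i * v i

/-- `f` is `y`-balanced: `y·f(x) = 0` for exactly half of the inputs `x`. -/
def IsBalancedFor {n m : ℕ} (f : (Fin n → ZMod 2) → Fin m → ZMod 2)
    (y : Fin m → ZMod 2) : Prop :=
  (Finset.univ.filter fun x => dotp y (f x) = 0).card =
    (Finset.univ.filter fun x => dotp y (f x) = 1).card

lemma dotp_add_right {k : ℕ} (y u v : Fin k → ZMod 2) :
    dotp y (u + v) = dotp y u + dotp y v := by
  simp [dotp, mul_add, Finset.sum_add_distrib]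

lemma dotp_smul_right {k : ℕ} (y : Fin k → ZMod 2) (c : ZMod 2) (u : Fin k → ZMod 2) :
    dotp y (c • u) = c * dotp y u := by
  simp [dotp, Finset.mul_sum, mul_left_comm]

lemma dotp_add_left {k : ℕ} (y u v : Fin k → ZMod 2) :
    dotp (y + u) v = dotp y v + dotp u v := by
  simp [dotp, add_mul, Finset.sum_add_distrib]

lemma dotp_smul_left {k : ℕ} (c : ZMod 2) (y v : Fin k → ZMod 2) :
    dotp (c • y) v = c * dotp y v := by
  simp [dotp, Finset.mul_sum, mul_assoc]

lemma dotp_single {k : ℕ} (u : Fin k → ZMod 2) (i : Fin k) :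
    dotp u (Pi.single i 1) = u i := by
  simp [dotp, Pi.single_apply, mul_ite]

lemma exists_dotp_one {k : ℕ} {u : Fin k → ZMod 2} (hu : u ≠ 0) :
    ∃ a, dotp u a = 1 := by
  have : ∃ i, u i ≠ 0 := by
    by_contra h
    push_neg at h
    exact hu (funext fun i => h i)
  obtain ⟨i, hi⟩ := this
  have : u i = 1 := by
    revert hi
    generalize u i = c
    revert c
    decide
  exact ⟨Pi.single i 1, by rw [dotp_single, this]⟩

lemma card_eq_of_additive {k : ℕ} (g : (Fin k → ZMod 2) → ZMod 2)
    (hadd : ∀ x x', g (x + x') = g x + g x') {a} (ha : g a = 1) :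
    (Finset.univ.filter fun x => g x = 0).card =
      (Finset.univ.filter fun x => g x = 1).card := by
  apply Finset.card_bij' (fun x _ => x + a) (fun x _ => x + a)
  · intro x hx
    simp only [Finset.mem_filter, Finset.mem_univ, true_and] at hx ⊢
    rw [hadd, hx, ha, zero_add]
  · intro x hx
    simp only [Finset.mem_filter, Finset.mem_univ, true_and] at hx ⊢
    rw [hadd, hx, ha]
    decide
  · intro x _
    have : a + a = 0 := by
      funext i
      simp only [Pi.add_apply, Pi.zero_apply]
      generalize a i = c; revert c; decide
    rw [add_assoc, this, add_zero]
  · intro x _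
    have : a + a = 0 := by
      funext i
      simp only [Pi.add_apply, Pi.zero_apply]
      generalize a i = c; revert c; decide
    rw [add_assoc, this, add_zero]

/-- `x ↦ dotp y x` as a linear map. -/
def dlin {k : ℕ} (y : Fin k → ZMod 2) : (Fin k → ZMod 2) →ₗ[ZMod 2] ZMod 2 where
  toFun := dotp y
  map_add' u v := dotp_add_right y u v
  map_smul' c u := dotp_smul_right y c u

/-- No sequence of `2^m − 2` GPK markers can distinguish image dimension `m − 1` from
image dimension `m` with certainty: for any set `M` of at most `2^m − 2` nonzero markers
there are a nonzero `y ∉ M` and linear maps `f₁` (of rank `m`) and `f₂` (with image the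
hyperplane `y·x = 0`, hence of rank `m − 1`) that are both balanced by every marker
in `M`. -/
theorem no_marker_selection_distinguishes (m : ℕ) (hm : 2 ≤ m)
    (M : Finset (Fin m → ZMod 2)) (hM0 : (0 : Fin m → ZMod 2) ∉ M)
    (hMcard : M.card ≤ 2 ^ m - 2) :
    ∃ y : Fin m → ZMod 2, y ≠ 0 ∧ y ∉ M ∧
      ∃ f₁ f₂ : (Fin m → ZMod 2) →ₗ[ZMod 2] (Fin m → ZMod 2),
        Module.finrank (ZMod 2) (LinearMap.range f₁) = m ∧
        (LinearMap.range f₂ : Set (Fin m → ZMod 2)) =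
          {x : Fin m → ZMod 2 | dotp y x = 0} ∧
        ∀ y' ∈ M, IsBalancedFor (⇑f₁) y' ∧ IsBalancedFor (⇑f₂) y' := by
  -- pick y outside M ∪ {0}
  have hcard : (insert (0 : Fin m → ZMod 2) M).card < Fintype.card (Fin m → ZMod 2) := by
    have h1 : (insert (0 : Fin m → ZMod 2) M).card ≤ M.card + 1 :=
      Finset.card_insert_le _ _
    have h2 : Fintype.card (Fin m → ZMod 2) = 2 ^ m := by simp
    have h3 : 2 ≤ 2 ^ m := by
      calc 2 ≤ 2 ^ 1 := by norm_num
      _ ≤ 2 ^ m := Nat.pow_le_pow_right (by norm_num) (by omega)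
    omega
  have hne : ((insert (0 : Fin m → ZMod 2) M)ᶜ : Finset _).Nonempty := by
    rw [← Finset.card_pos, Finset.card_compl]
    omega
  obtain ⟨y, hy⟩ := hne
  rw [Finset.mem_compl, Finset.mem_insert] at hy
  push_neg at hy
  obtain ⟨hy0, hyM⟩ := hy
  -- v with dotp y v = 1
  obtain ⟨v, hv⟩ := exists_dotp_one hy0
  set f₂ : (Fin m → ZMod 2) →ₗ[ZMod 2] (Fin m → ZMod 2) :=
    LinearMap.id + (dlin y).smulRight v with hf₂
  have happ : ∀ x, f₂ x = x + dotp y x • v := fun x => rfl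
  refine ⟨y, hy0, hyM, LinearMap.id, f₂, ?_, ?_, ?_⟩
  · rw [LinearMap.range_id, finrank_top]
    simp
  · -- range of f₂ is the hyperplane
    ext x
    simp only [SetLike.mem_coe, LinearMap.mem_range, Set.mem_setOf_eq]
    constructor
    · rintro ⟨w, rfl⟩
      rw [happ, dotp_add_right, dotp_smul_right, hv, mul_one]
      generalize dotp y w = c; revert c; decide
    · intro hx
      exact ⟨x, by rw [happ, hx, zero_smul, add_zero]⟩
  · intro y' hy'M
    have hy'0 : y' ≠ 0 := fun h => hM0 (h ▸ hy'M)
    have hy'y : y' ≠ y := fun h => hyM (h ▸ hy'M)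
    constructor
    · obtain ⟨a, ha⟩ := exists_dotp_one hy'0
      exact card_eq_of_additive _ (fun x x' => by
        simp only [LinearMap.id_coe, id_eq]; exact dotp_add_right y' x x') ha
    · set u : Fin m → ZMod 2 := y' + dotp y' v • y with hu
      have hg : ∀ x, dotp y' (f₂ x) = dotp u x := by
        intro x
        rw [happ, dotp_add_right, dotp_smul_right, hu, dotp_add_left, dotp_smul_left]
        ring
      have hune : u ≠ 0 := by
        have hc : dotp y' v = 0 ∨ dotp y' v = 1 := by
          generalize dotp y' v = c; revert c; decide
        rcases hc with hc | hc
        · rw [hu, hc, zero_smul, add_zero]; exact hy'0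
        · rw [hu, hc, one_smul]
          intro h
          apply hy'y
          funext i
          have := congrFun h i
          simp only [Pi.add_apply, Pi.zero_apply] at this
          revert this
          generalize y' i = a; generalize y i = b
          revert a b; decide
      obtain ⟨a, ha⟩ := exists_dotp_one hune
      apply card_eq_of_additive (fun x => dotp y' (f₂ x))
      · intro x x'
        rw [map_add, dotp_add_right]
      · rw [hg, ha]
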